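/- Let d \ge 1 be an integer, a, b \in \mathbb{C}, and \mu_2 > \mu_1 > -1/2. Then for all n \in \mathbb{N} and all 0 \le i \le \lfloor n/(d+1) \rfloor, the connection coefficient C_{n-i(d+1)}(n) = (n!/(n-i(d+1))!) \sum_{k=0}^{i} (\gamma_{\mu_1}(n-k(d+1))/\gamma_{\mu_2}(n-k(d+1))) ((-a)^{i-k}/(i-k)!) (b^k/k!) admits the integral representation C_{n-i(d+1)}(n) = (n! / (i! (n-i(d+1))! \, \beta(\mu_1+1/2, \mu_2-\mu_1))) \int_{-1}^{1} t^{n-i(d+1)} |t|^{2\mu_1} (b - a t^{d+1})^i (1-t)^{\mu_2-\mu_1-1} (1+t)^{\mu_2-\mu_1} \, dt. -/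

import Mathlib

open Finset

/-- The Dunkl generalized factorial: `γ_μ(2p+ε) = 2^(2p+ε) p! (μ+1/2)_{p+ε}`
for `ε ∈ {0,1}`. -/
noncomputable def dunklGamma (μ : ℝ) (n : ℕ) : ℝ :=
  2 ^ n * (Nat.factorial (n / 2) : ℝ) *
    ∏ i ∈ Finset.range (n / 2 + n % 2), (μ + 1 / 2 + i)

/-- Euler's Beta function `β(x,y) = Γ(x)Γ(y)/Γ(x+y)`. -/
noncomputable def realBeta (x y : ℝ) : ℝ :=
  Real.Gamma x * Real.Gamma y / Real.Gamma (x + y)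

/-!
Expanding `(b - a t^(d+1))^i` binomially reduces the claim to the moments of the weight
`w(t) = |t|^(2μ₁) (1-t)^(ν-1) (1+t)^ν`, `ν = μ₂ - μ₁`. On `[-1, 1]` we have
`w(t) = |t|^(2μ₁) (1-t²)^(ν-1) (1+t)`, so folding `t ↦ -t` replaces `t^j (1+t)` by
`t^j (1+t) + (-t)^j (1-t) = 2 t^(2q)` with `q = ⌈j/2⌉`, and the substitution `u = t²` turns
the `j`-th moment into `β(μ₁ + 1/2 + q, ν)`. The recursion `β(x+1, y) = β(x, y) x/(x+y)`
rewrites this as `β(μ₁ + 1/2, ν)` times `∏_{i<q} (μ₁+1/2+i)/(μ₂+1/2+i) = γ_{μ₁}(j)/γ_{μ₂}(j)`.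
-/

open MeasureTheory Set

section RealIntegrals

variable {E : Type*} [NormedAddCommGroup E]

lemma IntervalIntegrable.symmetric_of_even {f : ℝ → E} {a : ℝ} (hf : ∀ x, f (-x) = f x)
    (h : IntervalIntegrable f volume 0 a) : IntervalIntegrable f volume (-a) a := by
  have h' := (IntervalIntegrable.iff_comp_neg).1 h
  simp only [hf, neg_zero] at h'
  exact h'.symm.trans h

variable [NormedSpace ℝ E]

lemma intervalIntegral.integral_symmetric_eq_integral_add_comp_neg {f : ℝ → E} {a : ℝ}
    (hf : IntervalIntegrable f volume (-a) a) :
    ∫ x in -a..a, f x = ∫ x in 0..a, (f x + f (-x)) := by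
  have h0 : (0 : ℝ) ∈ uIcc (-a) a := by
    rcases le_total 0 a with h | h <;> simp [h]
  have hneg : IntervalIntegrable f volume (-a) 0 := hf.mono_set (uIcc_subset_uIcc_left h0)
  have hpos : IntervalIntegrable f volume 0 a := hf.mono_set (uIcc_subset_uIcc_right h0)
  have hneg' : IntervalIntegrable (fun x => f (-x)) volume 0 a := by
    simpa using ((IntervalIntegrable.iff_comp_neg).1 hneg).symm
  rw [intervalIntegral.integral_add hpos hneg', intervalIntegral.integral_comp_neg, neg_zero,
    ← intervalIntegral.integral_add_adjacent_intervals hneg hpos, add_comm]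

lemma image_sq_Ioo_zero_one : (fun t : ℝ => t ^ 2) '' Set.Ioo 0 1 = Set.Ioo (0 : ℝ) 1 := by
  ext u
  constructor
  · rintro ⟨t, ⟨h0, h1⟩, rfl⟩
    exact ⟨by positivity, by nlinarith⟩
  · rintro ⟨h0, h1⟩
    exact ⟨√u, ⟨Real.sqrt_pos.2 h0, (Real.sqrt_lt' one_pos).2 (by simpa using h1)⟩,
      Real.sq_sqrt h0.le⟩

lemma hasDerivWithinAt_sq (s : Set ℝ) (t : ℝ) :
    HasDerivWithinAt (fun t : ℝ => t ^ 2) (2 * t) s t := by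
  simpa using (hasDerivAt_pow 2 t).hasDerivWithinAt

lemma injOn_sq_Ioo : InjOn (fun t : ℝ => t ^ 2) (Ioo 0 1) :=
  (pow_left_strictMonoOn₀ two_ne_zero).injOn.mono fun _ ht => ht.1.le

lemma integrableOn_Ioo_iff_comp_sq (g : ℝ → E) :
    IntegrableOn g (Ioo 0 1) ↔ IntegrableOn (fun t => |2 * t| • g (t ^ 2)) (Ioo 0 1) := by
  conv_lhs => rw [← image_sq_Ioo_zero_one]
  exact integrableOn_image_iff_integrableOn_abs_deriv_smul measurableSet_Ioo
    (fun t _ => hasDerivWithinAt_sq _ t) injOn_sq_Ioo g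

lemma setIntegral_Ioo_eq_comp_sq (g : ℝ → E) :
    ∫ u in Ioo 0 1, g u = ∫ t in Ioo 0 1, |2 * t| • g (t ^ 2) := by
  conv_lhs => rw [← image_sq_Ioo_zero_one]
  exact integral_image_eq_integral_abs_deriv_smul measurableSet_Ioo
    (fun t _ => hasDerivWithinAt_sq _ t) injOn_sq_Ioo g

end RealIntegrals

lemma pow_mul_one_add_add_neg_pow_mul_one_sub {R : Type*} [CommRing R] (t : R) (j : ℕ) :
    t ^ j * (1 + t) + (-t) ^ j * (1 - t) = 2 * t ^ (2 * (j / 2 + j % 2)) := by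
  rcases Nat.even_or_odd' j with ⟨p, rfl | rfl⟩
  · rw [(even_two_mul p).neg_pow, show 2 * p / 2 + 2 * p % 2 = p by omega]
    ring
  · rw [(odd_two_mul_add_one p).neg_pow,
      show (2 * p + 1) / 2 + (2 * p + 1) % 2 = p + 1 by omega]
    ring

section Beta

variable {x y : ℝ}

lemma realBeta_pos (hx : 0 < x) (hy : 0 < y) : 0 < realBeta x y :=
  ProbabilityTheory.beta_pos hx hy

lemma realBeta_add_one (hx : 0 < x) (hy : 0 < y) :
    realBeta (x + 1) y = realBeta x y * (x / (x + y)) := by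
  have hxy : x + y ≠ 0 := by positivity
  have hG : Real.Gamma (x + y) ≠ 0 := (Real.Gamma_pos_of_pos (by positivity)).ne'
  unfold realBeta
  rw [show x + 1 + y = (x + y) + 1 by ring, Real.Gamma_add_one hx.ne', Real.Gamma_add_one hxy]
  field_simp

lemma realBeta_add_nat (hx : 0 < x) (hy : 0 < y) (q : ℕ) :
    realBeta (x + q) y = realBeta x y * ∏ i ∈ range q, (x + i) / (x + y + i) := by
  induction q with
  | zero => simp
  | succ q ih =>
    rw [Nat.cast_succ, ← add_assoc, realBeta_add_one (by positivity) hy, ih, prod_range_succ,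
      mul_assoc, add_right_comm x y]

lemma ofReal_beta_integrand {u : ℝ} (hu : u ∈ Icc (0 : ℝ) 1) :
    ((u ^ (x - 1) * (1 - u) ^ (y - 1) : ℝ) : ℂ) =
      (u : ℂ) ^ ((x : ℂ) - 1) * (1 - (u : ℂ)) ^ ((y : ℂ) - 1) := by
  push_cast [Complex.ofReal_cpow hu.1, Complex.ofReal_cpow (sub_nonneg.2 hu.2)]
  rfl

lemma integrableOn_Ioo_beta_integrand (hx : 0 < x) (hy : 0 < y) :
    IntegrableOn (fun u : ℝ => u ^ (x - 1) * (1 - u) ^ (y - 1)) (Ioo 0 1) := by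
  have hc := Complex.betaIntegral_convergent (u := x) (v := y) (by simpa) (by simpa)
  rw [intervalIntegrable_iff_integrableOn_Ioc_of_le zero_le_one] at hc
  refine IntegrableOn.congr_fun (hc.mono_set Ioo_subset_Ioc_self).re (fun u hu => ?_)
    measurableSet_Ioo
  simp [← ofReal_beta_integrand (Ioo_subset_Icc_self hu)]

lemma integral_Ioo_beta_integrand (hx : 0 < x) (hy : 0 < y) :
    ∫ u in Ioo 0 1, u ^ (x - 1) * (1 - u) ^ (y - 1) = realBeta x y := by
  have h : ((∫ u in Ioo 0 1, u ^ (x - 1) * (1 - u) ^ (y - 1) : ℝ) : ℂ) =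
      Complex.betaIntegral x y := by
    rw [← integral_complex_ofReal, Complex.betaIntegral,
      intervalIntegral.integral_of_le zero_le_one, integral_Ioc_eq_integral_Ioo]
    exact setIntegral_congr_fun measurableSet_Ioo
      fun u hu => ofReal_beta_integrand (Ioo_subset_Icc_self hu)
  rw [realBeta, ← ProbabilityTheory.beta, ProbabilityTheory.beta_eq_betaIntegralReal x y hx hy,
    ← h, Complex.ofReal_re]

lemma abs_two_mul_smul_beta_integrand_sq {t : ℝ} (ht : 0 < t) :
    |2 * t| • ((t ^ 2) ^ (x - 1) * (1 - t ^ 2) ^ (y - 1)) =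
      2 * (t ^ (2 * x - 1) * (1 - t ^ 2) ^ (y - 1)) := by
  rw [smul_eq_mul, abs_of_pos (by positivity), ← Real.rpow_natCast t 2,
    ← Real.rpow_mul ht.le, show 2 * x - 1 = ((2 : ℕ) : ℝ) * (x - 1) + 1 by push_cast; ring,
    Real.rpow_add_one ht.ne']
  ring

lemma integrableOn_Ioo_rpow_mul_one_sub_sq_rpow (hx : 0 < x) (hy : 0 < y) :
    IntegrableOn (fun t : ℝ => t ^ (2 * x - 1) * (1 - t ^ 2) ^ (y - 1)) (Ioo 0 1) := by
  have h := (integrableOn_Ioo_iff_comp_sq _).1 (integrableOn_Ioo_beta_integrand hx hy)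
  rw [IntegrableOn, ← integrable_const_mul_iff (two_ne_zero.isUnit : IsUnit (2 : ℝ))]
  exact h.congr_fun (fun t ht => abs_two_mul_smul_beta_integrand_sq ht.1) measurableSet_Ioo

lemma integral_Ioo_rpow_mul_one_sub_sq_rpow (hx : 0 < x) (hy : 0 < y) :
    ∫ t in Ioo 0 1, t ^ (2 * x - 1) * (1 - t ^ 2) ^ (y - 1) = realBeta x y / 2 := by
  have h := (integral_Ioo_beta_integrand hx hy).symm.trans (setIntegral_Ioo_eq_comp_sq _)
  rw [setIntegral_congr_fun measurableSet_Ioo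
    (fun t ht => abs_two_mul_smul_beta_integrand_sq ht.1), integral_const_mul] at h
  linarith

end Beta

lemma dunklGamma_div_dunklGamma (μ μ' : ℝ) (j : ℕ) :
    dunklGamma μ j / dunklGamma μ' j =
      ∏ i ∈ range (j / 2 + j % 2), (μ + 1 / 2 + i) / (μ' + 1 / 2 + i) := by
  rw [dunklGamma, dunklGamma, mul_div_mul_left _ _ (by positivity), prod_div_distrib]

section Weight

variable {μ ν : ℝ}

lemma pow_mul_weight_eq_of_mem_Icc (hν : ν ≠ 0) (j : ℕ) {t : ℝ}
    (ht : t ∈ Set.Icc (-1 : ℝ) 1) :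
    t ^ j * |t| ^ (2 * μ) * (1 - t) ^ (ν - 1) * (1 + t) ^ ν =
      |t| ^ (2 * μ) * (1 - t ^ 2) ^ (ν - 1) * (t ^ j * (1 + t)) := by
  have h1 : 0 ≤ 1 - t := by linarith [ht.2]
  have h2 : 0 ≤ 1 + t := by linarith [ht.1]
  have h3 : (1 + t) ^ ν = (1 + t) ^ (ν - 1) * (1 + t) := by
    rw [← Real.rpow_add_one' h2 (by simpa using hν), sub_add_cancel]
  rw [show 1 - t ^ 2 = (1 - t) * (1 + t) by ring, Real.mul_rpow h1 h2, h3]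
  ring

lemma intervalIntegrable_abs_rpow_mul_one_sub_sq_rpow (hμ : -(1 / 2) < μ) (hν : 0 < ν) :
    IntervalIntegrable (fun t : ℝ => |t| ^ (2 * μ) * (1 - t ^ 2) ^ (ν - 1)) volume (-1) 1 := by
  refine IntervalIntegrable.symmetric_of_even (fun t => by rw [abs_neg, neg_sq]) ?_
  rw [intervalIntegrable_iff_integrableOn_Ioo_of_le zero_le_one]
  refine (integrableOn_Ioo_rpow_mul_one_sub_sq_rpow (x := μ + 1 / 2) (by linarith) hν).congr_fun
    (fun t ht => ?_) measurableSet_Ioo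
  rw [abs_of_pos ht.1]
  ring_nf

lemma intervalIntegrable_pow_mul_weight (hμ : -(1 / 2) < μ) (hν : 0 < ν) (j : ℕ) :
    IntervalIntegrable (fun t : ℝ => t ^ j * |t| ^ (2 * μ) * (1 - t) ^ (ν - 1) * (1 + t) ^ ν)
      volume (-1) 1 := by
  refine ((intervalIntegrable_abs_rpow_mul_one_sub_sq_rpow hμ hν).mul_continuousOn
    (g := fun t => t ^ j * (1 + t)) (by fun_prop)).congr_uIoo fun t ht => ?_
  rw [uIoo_of_le (by norm_num)] at ht
  exact (pow_mul_weight_eq_of_mem_Icc hν.ne' j (Ioo_subset_Icc_self ht)).symm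

lemma integral_pow_mul_weight (hμ : -(1 / 2) < μ) (hν : 0 < ν) (j : ℕ) :
    ∫ t in (-1 : ℝ)..1, t ^ j * |t| ^ (2 * μ) * (1 - t) ^ (ν - 1) * (1 + t) ^ ν =
      realBeta (μ + 1 / 2 + (j / 2 + j % 2 : ℕ)) ν := by
  set q := j / 2 + j % 2
  have hint := (intervalIntegrable_abs_rpow_mul_one_sub_sq_rpow hμ hν).mul_continuousOn
    (g := fun t => t ^ j * (1 + t)) (by fun_prop)
  have hfold : ∀ t ∈ Set.Ioo (0 : ℝ) 1,
      |t| ^ (2 * μ) * (1 - t ^ 2) ^ (ν - 1) * (t ^ j * (1 + t)) +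
        |-t| ^ (2 * μ) * (1 - (-t) ^ 2) ^ (ν - 1) * ((-t) ^ j * (1 + -t)) =
      2 * (t ^ (2 * (μ + 1 / 2 + q) - 1) * (1 - t ^ 2) ^ (ν - 1)) := by
    intro t ht
    rw [abs_neg, neg_sq, ← mul_add, ← sub_eq_add_neg, pow_mul_one_add_add_neg_pow_mul_one_sub,
      abs_of_pos ht.1, show 2 * (μ + 1 / 2 + q) - 1 = 2 * μ + (2 * q : ℕ) by push_cast; ring,
      Real.rpow_add ht.1, Real.rpow_natCast]
    ring
  calc ∫ t in (-1 : ℝ)..1, t ^ j * |t| ^ (2 * μ) * (1 - t) ^ (ν - 1) * (1 + t) ^ ν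
      = ∫ t in (-1 : ℝ)..1, |t| ^ (2 * μ) * (1 - t ^ 2) ^ (ν - 1) * (t ^ j * (1 + t)) :=
        intervalIntegral.integral_congr fun t ht =>
          pow_mul_weight_eq_of_mem_Icc hν.ne' j (by rwa [Set.uIcc_of_le (by norm_num)] at ht)
    _ = ∫ t in (0 : ℝ)..1, 2 * (t ^ (2 * (μ + 1 / 2 + q) - 1) * (1 - t ^ 2) ^ (ν - 1)) := by
        rw [intervalIntegral.integral_symmetric_eq_integral_add_comp_neg hint]
        exact intervalIntegral.integral_congr_Ioo_of_le zero_le_one hfold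
    _ = realBeta (μ + 1 / 2 + q) ν := by
        rw [intervalIntegral.integral_of_le zero_le_one, integral_Ioc_eq_integral_Ioo,
          integral_const_mul,
          integral_Ioo_rpow_mul_one_sub_sq_rpow (by linarith [q.cast_nonneg (α := ℝ)]) hν]
        ring

end Weight

lemma integral_pow_mul_weight_eq_realBeta_mul_dunklGamma_div {μ1 μ2 : ℝ}
    (h1 : -(1 / 2) < μ1) (h2 : μ1 < μ2) (j : ℕ) :
    ∫ t in (-1 : ℝ)..1,
        t ^ j * |t| ^ (2 * μ1) * (1 - t) ^ (μ2 - μ1 - 1) * (1 + t) ^ (μ2 - μ1) =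
      realBeta (μ1 + 1 / 2) (μ2 - μ1) * (dunklGamma μ1 j / dunklGamma μ2 j) := by
  rw [integral_pow_mul_weight h1 (sub_pos.2 h2), realBeta_add_nat (by linarith) (sub_pos.2 h2),
    dunklGamma_div_dunklGamma]
  congr 1
  exact prod_congr rfl fun i _ => by ring_nf

lemma integral_ofReal_pow_mul_mul_sub_mul_pow_pow {w : ℝ → ℝ} {α β : ℝ}
    (hw : ∀ j : ℕ, IntervalIntegrable (fun t => t ^ j * w t) volume α β)
    (m e i : ℕ) (a b : ℂ) :
    ∫ t in α..β, ((t ^ m * w t : ℝ) : ℂ) * (b - a * (t : ℂ) ^ e) ^ i =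
      ∑ k ∈ range (i + 1), b ^ k * (-a) ^ (i - k) * (i.choose k : ℂ) *
        ((∫ t in α..β, t ^ (m + e * (i - k)) * w t : ℝ) : ℂ) := by
  have hexpand : ∀ t : ℝ, ((t ^ m * w t : ℝ) : ℂ) * (b - a * (t : ℂ) ^ e) ^ i =
      ∑ k ∈ range (i + 1), b ^ k * (-a) ^ (i - k) * (i.choose k : ℂ) *
        ((t ^ (m + e * (i - k)) * w t : ℝ) : ℂ) := by
    intro t
    rw [sub_eq_add_neg, add_pow, mul_sum]
    refine sum_congr rfl fun k _ => ?_
    push_cast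
    rw [← neg_mul, mul_pow, ← pow_mul, pow_add]
    ring
  simp_rw [hexpand]
  rw [intervalIntegral.integral_finsetSum fun k _ => (IntervalIntegrable.const_mul
    ⟨Integrable.ofReal (hw _).1, Integrable.ofReal (hw _).2⟩ _)]
  simp_rw [intervalIntegral.integral_const_mul, intervalIntegral.integral_ofReal]

theorem gghQ_connection_coeff_integral_rep_general
    (d : ℕ) (a b : ℂ) (μ1 μ2 : ℝ)
    (h1 : -(1/2) < μ1) (h2 : μ1 < μ2)
    (n i : ℕ) (hi : i ≤ n / (d + 1)) :
    (Nat.factorial n : ℂ) / (Nat.factorial (n - i * (d + 1)) : ℂ) *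
        ∑ k ∈ Finset.range (i + 1),
          ((dunklGamma μ1 (n - k * (d + 1)) / dunklGamma μ2 (n - k * (d + 1)) : ℝ) : ℂ) *
            ((-a) ^ (i - k) / (Nat.factorial (i - k) : ℂ)) *
            (b ^ k / (Nat.factorial k : ℂ)) =
      (Nat.factorial n : ℂ) /
          ((Nat.factorial i : ℂ) * (Nat.factorial (n - i * (d + 1)) : ℂ) *
            ((realBeta (μ1 + 1/2) (μ2 - μ1) : ℝ) : ℂ)) *
        ∫ t in (-1:ℝ)..1,
          ((t ^ (n - i * (d + 1)) * |t| ^ (2 * μ1) *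
              (1 - t) ^ (μ2 - μ1 - 1) * (1 + t) ^ (μ2 - μ1) : ℝ) : ℂ) *
            (b - a * (t : ℂ) ^ (d + 1)) ^ i := by
  have hexpand := integral_ofReal_pow_mul_mul_sub_mul_pow_pow
    (w := fun t => |t| ^ (2 * μ1) * (1 - t) ^ (μ2 - μ1 - 1) * (1 + t) ^ (μ2 - μ1))
    (fun j => by
      simpa only [mul_assoc] using intervalIntegrable_pow_mul_weight h1 (sub_pos.2 h2) j)
    (n - i * (d + 1)) (d + 1) i a b
  simp only [← mul_assoc] at hexpand
  rw [hexpand, mul_sum, mul_sum]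
  refine sum_congr rfl fun k hk => ?_
  have hk : k ≤ i := Nat.lt_succ_iff.1 (mem_range.1 hk)
  have hdeg : n - i * (d + 1) + (d + 1) * (i - k) = n - k * (d + 1) := by
    have := (Nat.le_div_iff_mul_le (by omega : 0 < d + 1)).1 hi
    rw [mul_comm (d + 1), Nat.sub_mul]
    have := Nat.mul_le_mul_right (d + 1) hk
    omega
  have hβ : ((realBeta (μ1 + 1 / 2) (μ2 - μ1) : ℝ) : ℂ) ≠ 0 :=
    Complex.ofReal_ne_zero.2 (realBeta_pos (by linarith) (by linarith)).ne'
  have hi0 : (i.factorial : ℂ) ≠ 0 := Nat.cast_ne_zero.2 i.factorial_ne_zero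
  rw [hdeg, integral_pow_mul_weight_eq_realBeta_mul_dunklGamma_div h1 h2, Nat.cast_choose ℂ hk,
    Complex.ofReal_mul]
  generalize ((realBeta (μ1 + 1 / 2) (μ2 - μ1) : ℝ) : ℂ) = β at hβ ⊢
  field_simp

/-- integral representation of the connection coefficients
between two generalized Gould–Hopper polynomial sets. -/
theorem gghQ_connection_coeff_integral_rep
    (d : ℕ) (hd : 1 ≤ d) (a b : ℂ) (μ1 μ2 : ℝ)
    (h1 : -(1/2) < μ1) (h2 : μ1 < μ2)
    (n i : ℕ) (hi : i ≤ n / (d + 1)) :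
    (Nat.factorial n : ℂ) / (Nat.factorial (n - i * (d + 1)) : ℂ) *
        ∑ k ∈ Finset.range (i + 1),
          ((dunklGamma μ1 (n - k * (d + 1)) / dunklGamma μ2 (n - k * (d + 1)) : ℝ) : ℂ) *
            ((-a) ^ (i - k) / (Nat.factorial (i - k) : ℂ)) *
            (b ^ k / (Nat.factorial k : ℂ)) =
      (Nat.factorial n : ℂ) /
          ((Nat.factorial i : ℂ) * (Nat.factorial (n - i * (d + 1)) : ℂ) *
            ((realBeta (μ1 + 1/2) (μ2 - μ1) : ℝ) : ℂ)) *
        ∫ t in (-1:ℝ)..1,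
          ((t ^ (n - i * (d + 1)) * |t| ^ (2 * μ1) *
              (1 - t) ^ (μ2 - μ1 - 1) * (1 + t) ^ (μ2 - μ1) : ℝ) : ℂ) *
            (b - a * (t : ℂ) ^ (d + 1)) ^ i :=
  gghQ_connection_coeff_integral_rep_general d a b μ1 μ2 h1 h2 n i hi
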